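/- Fix t > 0 and y with y_C(t) < y < 1, and on the event {y > y_C^{(N)}(t)} define the random variable ŷ^{(N)}(y,t) = inf{ y_{i,0}^{(N)} : i ∈ {1,…,N}, Y_i^{(N)}(t) > y }. Then for every ε > 0, P( y > y_C^{(N)}(t) and |ŷ^{(N)}(y,t) − ŷ(y,t)| > ε ) → 0 as N → ∞; that is, ŷ^{(N)}(y,t) converges to the deterministic value ŷ(y,t) in probability. -/

import Mathlib

open MeasureTheory ProbabilityTheory Filter Topology Real Set NNReal BoundedContinuousFunction

noncomputable section

/-- The stochastic ranking process of `N` particles on a probability space `Ω`: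
jump rates `w i > 0`, initial ranks `x0` (a permutation of `1,…,N`), jump times
`τ i j` with `τ i 0 = 0`, strictly increasing in `j` (a.s.), independent among
particles, with i.i.d. increments that are exponential of rate `w i`; together
with the ranking process `X`, defined by the explicit formulas of the paper. -/
structure RankingSystem (Ω : Type) [MeasureSpace Ω] (N : ℕ) where
  /-- jump rates -/
  w : Fin N → ℝ≥0
  w_pos : ∀ i, 0 < w i
  /-- initial ranks -/
  x0 : Fin N → ℕ
  /-- the initial ranks form a permutation of `1,…,N` -/
  x0_perm : ∀ k ∈ Finset.Icc 1 N, ∃! i : Fin N, x0 i = k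
  /-- jump times; `τ i j` is the `j`-th jump time of particle `i` -/
  τ : Fin N → ℕ → Ω → ℝ
  τ_meas : ∀ i j, Measurable fun ω => τ i j ω
  τ_zero : ∀ i ω, τ i 0 ω = 0
  τ_mono : ∀ᵐ ω ∂(ℙ : Measure Ω), ∀ i, StrictMono fun j => τ i j ω
  /-- independence of the jump-time sequences of different particles -/
  indep : iIndepFun
    (fun i ω => fun j => τ i j ω) (ℙ : Measure Ω)
  /-- independence of the increments of the jump times of each particle -/
  incr_indep : ∀ i, iIndepFun
    (fun j ω => τ i (j + 1) ω - τ i j ω) (ℙ : Measure Ω)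
  /-- each increment is exponentially distributed with rate `w i` -/
  incr_exp : ∀ i j (t : ℝ), 0 ≤ t →
    (ℙ : Measure Ω) {ω | τ i (j + 1) ω - τ i j ω ≤ t}
      = ENNReal.ofReal (1 - Real.exp (-(w i : ℝ) * t))
  /-- the ranking of particle `i` at time `t` -/
  X : Fin N → ℝ → Ω → ℕ
  /-- before the first jump of `i`:
  `X_i(t) = x_{i,0} + #{i' : x_{i',0} > x_{i,0}, τ_{i',1} ≤ t}` -/
  X_def1 : ∀ ω i (t : ℝ), 0 ≤ t → t < τ i 1 ω →
    X i t ω = x0 i + Set.ncard {i' : Fin N | x0 i < x0 i' ∧ τ i' 1 ω ≤ t}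
  /-- at each jump time the particle goes to the top: `X_i(τ_{i,j}) = 1` -/
  X_def2 : ∀ ω i (j : ℕ), 1 ≤ j → X i (τ i j ω) ω = 1
  /-- between consecutive jumps:
  `X_i(t) = #{i' : ∃ j' ≥ 1, τ_{i,j} < τ_{i',j'} ≤ t}` for `τ_{i,j} < t < τ_{i,j+1}` -/
  X_def3 : ∀ ω i (j : ℕ) (t : ℝ), 1 ≤ j → τ i j ω < t → t < τ i (j + 1) ω →
    X i t ω = Set.ncard
      {i' : Fin N | ∃ j' : ℕ, 1 ≤ j' ∧ τ i j ω < τ i' j' ω ∧ τ i' j' ω ≤ t}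

/-- the scaled position `Y_i^{(N)}(t) = (X_i^{(N)}(t) - 1)/N` -/
def RankingSystem.Y {Ω : Type} [MeasureSpace Ω] {N : ℕ} (R : RankingSystem Ω N)
    (i : Fin N) (t : ℝ) (ω : Ω) : ℝ :=
  ((R.X i t ω : ℝ) - 1) / N

/-- the scaled boundary position `y_C^{(N)}(t) = (1/N) Σ_i χ_{τ_{i,1} ≤ t}` -/
def RankingSystem.yCN {Ω : Type} [MeasureSpace Ω] {N : ℕ} (R : RankingSystem Ω N)
    (t : ℝ) (ω : Ω) : ℝ :=
  (N : ℝ)⁻¹ * ∑ i : Fin N, if R.τ i 1 ω ≤ t then (1 : ℝ) else 0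

/-- the scaled initial position `y_{i,0}^{(N)} = (x_{i,0}^{(N)} - 1)/N` -/
def RankingSystem.y0 {Ω : Type} [MeasureSpace Ω] {N : ℕ} (R : RankingSystem Ω N)
    (i : Fin N) : ℝ :=
  ((R.x0 i : ℝ) - 1) / N

/-!
A particle that has not jumped by time `t` has been overtaken exactly by the particles behind it
that have jumped, so its scaled position is `1 - 1/N` minus the fraction of survivors initially
behind it; a particle that has jumped sits below `y_C^{(N)}(t)`. Hence, on `{y_C^{(N)}(t) < y}`,
writing `S_z` for the fraction of survivors starting beyond `z`: `ŷ^{(N)}(y,t) ≥ z` as soon as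
`S_z ≥ 1 - y`, and `ŷ^{(N)}(y,t) ≤ z` as soon as some survivor starts at `≤ z` and
`S_z < 1 - y - 1/N`. Survivor fractions are averages of independent indicators, so by Chebyshev
they concentrate at their means, which by the hypothesis on the initial configuration tend to
`∫_0^z I` and `∫_z^1 I`, with `I(u) = ∫ e^{-wt} μ_{u,0}(dw) > 0`. As `∫_{ŷ(y,t)}^1 I = 1 - y`
and `z ↦ ∫_z^1 I` is strictly decreasing, taking `z = ŷ(y,t) ∓ ε` gives the claim.
-/

section ConvergenceInMeasure

variable {α ι : Type*} [MeasurableSpace α] {μ : Measure α} {l : Filter ι}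

lemma tendsto_measure_zero_of_eventually_ae_le {E A : ι → Set α}
    (h : ∀ᶠ n in l, E n ≤ᵐ[μ] A n) (hA : Tendsto (fun n => μ (A n)) l (𝓝 0)) :
    Tendsto (fun n => μ (E n)) l (𝓝 0) :=
  tendsto_of_tendsto_of_tendsto_of_le_of_le' tendsto_const_nhds hA
    (Eventually.of_forall fun _ => zero_le) (h.mono fun _ => measure_mono_ae)

lemma tendsto_measure_union_zero {A B : ι → Set α} (hA : Tendsto (fun n => μ (A n)) l (𝓝 0))
    (hB : Tendsto (fun n => μ (B n)) l (𝓝 0)) : Tendsto (fun n => μ (A n ∪ B n)) l (𝓝 0) :=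
  tendsto_of_tendsto_of_tendsto_of_le_of_le tendsto_const_nhds (by simpa using hA.add hB)
    (fun _ => zero_le) fun _ => measure_union_le _ _

lemma TendstoInMeasure.tendsto_measure_le_of_lt {f : ι → α → ℝ} {m a : ℝ}
    (hf : TendstoInMeasure μ f l fun _ => m) (ha : a < m) :
    Tendsto (fun n => μ {x | f n x ≤ a}) l (𝓝 0) :=
  tendsto_of_tendsto_of_tendsto_of_le_of_le tendsto_const_nhds
    (tendstoInMeasure_iff_dist.1 hf _ (sub_pos.2 ha)) (fun _ => zero_le) fun _ =>
      measure_mono fun x (hx : f _ x ≤ a) => by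
        rw [Set.mem_ofPred_eq, Real.dist_eq, abs_sub_comm]
        exact le_abs.2 (Or.inl (by linarith))

lemma TendstoInMeasure.tendsto_measure_ge_of_gt {f : ι → α → ℝ} {m a : ℝ}
    (hf : TendstoInMeasure μ f l fun _ => m) (ha : m < a) :
    Tendsto (fun n => μ {x | a ≤ f n x}) l (𝓝 0) :=
  tendsto_of_tendsto_of_tendsto_of_le_of_le tendsto_const_nhds
    (tendstoInMeasure_iff_dist.1 hf _ (sub_pos.2 ha)) (fun _ => zero_le) fun _ =>
      measure_mono fun x (hx : a ≤ f _ x) => by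
        rw [Set.mem_ofPred_eq, Real.dist_eq]
        exact le_abs.2 (Or.inl (by linarith))

end ConvergenceInMeasure

lemma exists_le_lt_succ {u : ℕ → ℝ} {t : ℝ} (h0 : u 0 ≤ t) (h1 : u 1 ≤ t) (h : ∃ j, t < u j) :
    ∃ m, 1 ≤ m ∧ u m ≤ t ∧ t < u (m + 1) := by
  have hfind : 2 ≤ Nat.find h := by
    by_contra! hlt
    interval_cases hj : Nat.find h
    · exact (Nat.find_spec h).not_ge (hj ▸ h0)
    · exact (Nat.find_spec h).not_ge (hj ▸ h1)
  refine ⟨Nat.find h - 1, by omega, not_lt.1 (Nat.find_min h (by omega)), ?_⟩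
  rw [Nat.sub_add_cancel (by omega)]
  exact Nat.find_spec h

lemma eventually_inv_lt {c : ℝ} (hc : 0 < c) : ∀ᶠ N : ℕ in atTop, (N : ℝ)⁻¹ < c :=
  (tendsto_inv_atTop_zero.comp tendsto_natCast_atTop_atTop).eventually_lt_const hc

namespace RankingSystem

variable {Ω : Type} [MeasureSpace Ω]

section System

variable {N : ℕ} (R : RankingSystem Ω N)

def survivorFrac (p : ℝ → Prop) [DecidablePred p] (t : ℝ) (ω : Ω) : ℝ :=
  ((Finset.univ.filter fun i => p (R.y0 i) ∧ t < R.τ i 1 ω).card : ℝ) / N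

/-- The paper's `ŷ^{(N)}(y,t)`; it is `sInf ∅ = 0` when no particle lies beyond `y`. -/
def yhatN (y t : ℝ) (ω : Ω) : ℝ :=
  sInf {x : ℝ | ∃ i : Fin N, R.y0 i = x ∧ y < R.Y i t ω}

lemma x0_mem_Icc (i : Fin N) : R.x0 i ∈ Finset.Icc 1 N := by
  set S := Finset.univ.filter fun i => R.x0 i ∈ Finset.Icc 1 N
  have hsurj : Set.SurjOn R.x0 S (Finset.Icc 1 N) := fun k hk =>
    let ⟨i, hi, _⟩ := R.x0_perm k hk
    ⟨i, by simpa [S, hi] using hk, hi⟩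
  have hS : S = Finset.univ := by
    refine Finset.eq_univ_of_card S (le_antisymm (Finset.card_le_univ S) ?_)
    simpa using Finset.card_le_card_of_surjOn R.x0 hsurj
  have hi : i ∈ S := hS ▸ Finset.mem_univ i
  simpa [S] using hi

lemma x0_injective : Function.Injective R.x0 := fun i _ hij =>
  (R.x0_perm (R.x0 i) (R.x0_mem_Icc i)).unique rfl hij.symm

lemma card_x0_lt (i : Fin N) :
    (Finset.univ.filter fun i' => R.x0 i < R.x0 i').card = N - R.x0 i := by
  have himage : Finset.univ.image R.x0 = Finset.Icc 1 N :=
    Finset.eq_of_subset_of_card_le (Finset.image_subset_iff.2 fun i _ => R.x0_mem_Icc i)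
      (by simp [Finset.card_image_of_injective _ R.x0_injective])
  have hIoc : (Finset.Icc 1 N).filter (R.x0 i < ·) = Finset.Ioc (R.x0 i) N := by
    ext k
    simp only [Finset.mem_filter, Finset.mem_Icc, Finset.mem_Ioc]
    omega
  rw [← Finset.card_image_of_injective _ R.x0_injective, ← Finset.filter_image, himage, hIoc,
    Nat.card_Ioc]

lemma y0_lt_y0_iff {i i' : Fin N} : R.y0 i < R.y0 i' ↔ R.x0 i < R.x0 i' := by
  have hN : (0 : ℝ) < N := Nat.cast_pos.2 i.pos
  simp [y0, div_lt_div_iff_of_pos_right hN]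

lemma y0_nonneg (i : Fin N) : 0 ≤ R.y0 i :=
  div_nonneg (sub_nonneg.2 (by exact_mod_cast (Finset.mem_Icc.1 (R.x0_mem_Icc i)).1))
    (Nat.cast_nonneg N)

lemma y0_le_one_sub_inv (i : Fin N) : R.y0 i ≤ 1 - (N : ℝ)⁻¹ := by
  have hN : (0 : ℝ) < N := Nat.cast_pos.2 i.pos
  have : (R.x0 i : ℝ) ≤ N := by exact_mod_cast (Finset.mem_Icc.1 (R.x0_mem_Icc i)).2
  rw [y0, div_le_iff₀ hN, sub_mul, inv_mul_cancel₀ hN.ne']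
  linarith

lemma y0_lt_one (i : Fin N) : R.y0 i < 1 :=
  (R.y0_le_one_sub_inv i).trans_lt (sub_lt_self 1 (inv_pos.2 (Nat.cast_pos.2 i.pos)))

lemma yCN_eq_card (t : ℝ) (ω : Ω) :
    R.yCN t ω = ((Finset.univ.filter fun i => R.τ i 1 ω ≤ t).card : ℝ) / N := by
  rw [yCN, Finset.sum_boole, inv_mul_eq_div]

lemma survivorFrac_eq_sum (p : ℝ → Prop) [DecidablePred p] (t : ℝ) :
    R.survivorFrac p t = ∑ i ∈ Finset.univ.filter fun i => p (R.y0 i),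
      fun ω => if t < R.τ i 1 ω then (N : ℝ)⁻¹ else 0 := by
  ext ω
  simp [survivorFrac, Finset.sum_apply, Finset.sum_ite, Finset.filter_filter, div_eq_mul_inv]

/-- `X_i = x_{i,0} + #(behind i, jumped)` and `x_{i,0} + #(behind i) = N`. -/
lemma Y_eq_of_lt_τ {t : ℝ} (ht : 0 ≤ t) {ω : Ω} {i : Fin N} (h : t < R.τ i 1 ω) :
    R.Y i t ω =
      1 - (N : ℝ)⁻¹
        - ((Finset.univ.filter fun i' => R.x0 i < R.x0 i' ∧ t < R.τ i' 1 ω).card : ℝ) / N := by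
  have hN : (0 : ℝ) < N := Nat.cast_pos.2 i.pos
  have hsplit := Finset.card_filter_add_card_filter_not (p := fun i' => R.τ i' 1 ω ≤ t)
    (s := Finset.univ.filter fun i' => R.x0 i < R.x0 i')
  simp only [Finset.filter_filter, not_le, R.card_x0_lt] at hsplit
  have hX : R.X i t ω
      = R.x0 i + (Finset.univ.filter fun i' => R.x0 i < R.x0 i' ∧ R.τ i' 1 ω ≤ t).card := by
    rw [R.X_def1 ω i t ht h, Set.ncard_eq_toFinset_card']
    simp
  have hx0 := (Finset.mem_Icc.1 (R.x0_mem_Icc i)).2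
  have hsum : (R.X i t ω : ℝ)
      + (Finset.univ.filter fun i' => R.x0 i < R.x0 i' ∧ t < R.τ i' 1 ω).card = N := by
    rw [hX]
    exact_mod_cast (by omega)
  rw [Y]
  field_simp
  linarith

lemma Y_le_of_y0_le {t : ℝ} (ht : 0 ≤ t) {ω : Ω} {i : Fin N} (h : t < R.τ i 1 ω) {z : ℝ}
    (hz : R.y0 i ≤ z) : R.Y i t ω ≤ 1 - (N : ℝ)⁻¹ - R.survivorFrac (z < ·) t ω := by
  have hsub : (Finset.univ.filter fun i' => z < R.y0 i' ∧ t < R.τ i' 1 ω)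
      ⊆ Finset.univ.filter fun i' => R.x0 i < R.x0 i' ∧ t < R.τ i' 1 ω := by
    intro i' hi'
    simp only [Finset.mem_filter, Finset.mem_univ, true_and] at hi' ⊢
    exact ⟨R.y0_lt_y0_iff.1 (hz.trans_lt hi'.1), hi'.2⟩
  rw [R.Y_eq_of_lt_τ ht h, survivorFrac]
  gcongr

/-- The witness is the survivor starting at `≤ z` with the largest initial rank: the survivors
behind it are exactly those starting beyond `z`. -/
lemma exists_Y_eq_of_survivor {t : ℝ} (ht : 0 ≤ t) {ω : Ω} {z : ℝ}
    (h : ∃ i, R.y0 i ≤ z ∧ t < R.τ i 1 ω) :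
    ∃ i, R.y0 i ≤ z ∧ R.Y i t ω = 1 - (N : ℝ)⁻¹ - R.survivorFrac (z < ·) t ω := by
  obtain ⟨i, hi, hmax⟩ := (Finset.univ.filter fun i => R.y0 i ≤ z ∧ t < R.τ i 1 ω).exists_max_image
    R.x0 (by simpa [Finset.Nonempty] using h)
  simp only [Finset.mem_filter, Finset.mem_univ, true_and] at hi hmax
  refine ⟨i, hi.1, ?_⟩
  rw [R.Y_eq_of_lt_τ ht hi.2, survivorFrac]
  congr 4
  ext i'
  simp only [Finset.mem_filter, Finset.mem_univ, true_and, and_congr_left_iff]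
  intro hi'
  constructor
  · intro hx
    by_contra hz
    exact (hmax i' ⟨not_lt.1 hz, hi'⟩).not_gt hx
  · intro hz
    exact R.y0_lt_y0_iff.1 (hi.1.trans_lt hz)

lemma exists_lt_τ_of_yCN_lt_one (hN : 0 < N) {t : ℝ} {ω : Ω} (h : R.yCN t ω < 1) :
    ∃ i, t < R.τ i 1 ω := by
  by_contra! hall
  have hN' : (N : ℝ) ≠ 0 := Nat.cast_ne_zero.2 hN.ne'
  rw [yCN_eq_card, Finset.filter_true_of_mem fun i _ => hall i] at h
  simp [hN'] at h

/-- Between its last jump and `t`, only particles that have jumped can overtake particle `i`. -/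
lemma Y_le_yCN_sub_of_τ_le {t : ℝ} (ht : 0 ≤ t) {ω : Ω}
    (hmono : ∀ i, Monotone fun j => R.τ i j ω) {i : Fin N} (hesc : ∃ j, t < R.τ i j ω)
    (h : R.τ i 1 ω ≤ t) : R.Y i t ω ≤ R.yCN t ω - (N : ℝ)⁻¹ := by
  have hX : R.X i t ω ≤ (Finset.univ.filter fun i' => R.τ i' 1 ω ≤ t).card := by
    obtain ⟨m, hm, hle, hlt⟩ := exists_le_lt_succ (by rw [R.τ_zero]; exact ht) h hesc
    rcases hle.lt_or_eq with hlt' | heq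
    · rw [R.X_def3 ω i m t hm hlt' hlt, ← Set.ncard_coe_finset]
      refine Set.ncard_le_ncard (fun i' ⟨j', hj', _, hj't⟩ => ?_) (Set.toFinite _)
      simpa using (hmono i' hj').trans hj't
    · have hX1 : R.X i t ω = 1 := heq ▸ R.X_def2 ω i m hm
      rw [hX1]
      exact Finset.card_pos.2 ⟨i, by simpa using h⟩
  rw [Y, yCN_eq_card, inv_eq_one_div, div_sub_div_same]
  gcongr

lemma bddBelow_y0 (P : Fin N → Prop) : BddBelow {x : ℝ | ∃ i, R.y0 i = x ∧ P i} :=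
  ⟨0, fun _ ⟨i, hi, _⟩ => hi ▸ R.y0_nonneg i⟩

lemma yhatN_nonneg (y t : ℝ) (ω : Ω) : 0 ≤ R.yhatN y t ω :=
  Real.sInf_nonneg fun _ ⟨i, hi, _⟩ => hi ▸ R.y0_nonneg i

lemma yhatN_lt_one (y t : ℝ) (ω : Ω) : R.yhatN y t ω < 1 := by
  rcases Set.eq_empty_or_nonempty {x : ℝ | ∃ i : Fin N, R.y0 i = x ∧ y < R.Y i t ω}
    with hempty | ⟨x, i, rfl, hi⟩
  · rw [yhatN, hempty, Real.sInf_empty]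
    exact one_pos
  · exact (csInf_le (R.bddBelow_y0 _) ⟨i, rfl, hi⟩).trans_lt (R.y0_lt_one i)

lemma yhatN_le {t : ℝ} (ht : 0 ≤ t) {ω : Ω} {y z : ℝ}
    (hsurv : 0 < R.survivorFrac (· ≤ z) t ω)
    (hbeyond : R.survivorFrac (z < ·) t ω < 1 - y - (N : ℝ)⁻¹) : R.yhatN y t ω ≤ z := by
  have hcard : 0 < (Finset.univ.filter fun i => R.y0 i ≤ z ∧ t < R.τ i 1 ω).card :=
    Nat.pos_of_ne_zero fun h0 => by simp [survivorFrac, h0] at hsurv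
  obtain ⟨i, hi⟩ := Finset.card_pos.1 hcard
  obtain ⟨i, hi, hY⟩ := R.exists_Y_eq_of_survivor ht ⟨i, by simpa using hi⟩
  exact (csInf_le (R.bddBelow_y0 _) ⟨i, rfl, by linarith⟩).trans hi

lemma le_yhatN {t : ℝ} (ht : 0 ≤ t) {ω : Ω} {y z : ℝ} (hN : 0 < N) (hNy : (N : ℝ)⁻¹ < 1 - y)
    (hjumped : ∀ i, R.τ i 1 ω ≤ t → R.Y i t ω ≤ R.yCN t ω - (N : ℝ)⁻¹) (hyCN : R.yCN t ω < y)
    (hbeyond : 1 - y ≤ R.survivorFrac (z < ·) t ω) : z ≤ R.yhatN y t ω := by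
  have hinv : (0 : ℝ) < (N : ℝ)⁻¹ := by positivity
  obtain ⟨i, hi⟩ := R.exists_lt_τ_of_yCN_lt_one hN (hyCN.trans (by linarith))
  obtain ⟨i, -, hY⟩ := R.exists_Y_eq_of_survivor (z := 1) ht ⟨i, (R.y0_lt_one i).le, hi⟩
  have hnone : R.survivorFrac (1 < ·) t ω = 0 := by
    simp [survivorFrac, Finset.filter_false_of_mem fun i _ => not_and.2 fun h => absurd h
      (R.y0_lt_one i).not_gt]
  refine le_csInf ⟨R.y0 i, i, rfl, by linarith⟩ fun x ⟨i', hx, hi'⟩ => ?_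
  rw [← hx]
  by_contra! hlt
  rcases le_or_gt (R.τ i' 1 ω) t with hτ | hτ
  · linarith [hjumped i' hτ]
  · linarith [R.Y_le_of_y0_le ht hτ hlt.le]

/-- Otherwise the first `m` increments would all be `≤ t`, which has probability
`(1 - e^{-w t})^m`. -/
lemma ae_exists_lt_τ (i : Fin N) {t : ℝ} (ht : 0 ≤ t) :
    ∀ᵐ ω ∂(ℙ : Measure Ω), ∃ j, t < R.τ i j ω := by
  set r := ENNReal.ofReal (1 - rexp (-(R.w i : ℝ) * t))
  have hr : r < 1 := by
    rw [← ENNReal.ofReal_one, ENNReal.ofReal_lt_ofReal_iff one_pos]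
    linarith [Real.exp_pos (-(R.w i : ℝ) * t)]
  have hincr : ∀ m, (ℙ : Measure Ω)
      (⋂ k ∈ Finset.range m, (fun ω => R.τ i (k + 1) ω - R.τ i k ω) ⁻¹' Iic t) = r ^ m := by
    intro m
    have hk : ∀ k, (ℙ : Measure Ω) ((fun ω => R.τ i (k + 1) ω - R.τ i k ω) ⁻¹' Iic t) = r :=
      fun k => R.incr_exp i k t ht
    rw [iIndepFun_iff_measure_inter_preimage_eq_mul.1 (R.incr_indep i) (Finset.range m)
      (fun _ _ => measurableSet_Iic)]
    simp only [hk, Finset.prod_const, Finset.card_range]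
  have hsub : ∀ m, {ω | ∀ j, R.τ i j ω ≤ t}
      ≤ᵐ[ℙ] ⋂ k ∈ Finset.range m, (fun ω => R.τ i (k + 1) ω - R.τ i k ω) ⁻¹' Iic t := by
    intro m
    filter_upwards [R.τ_mono] with ω hmono (hall : ∀ j, R.τ i j ω ≤ t)
    refine Set.mem_iInter₂.2 fun k _ => ?_
    have := (hmono i).monotone (Nat.zero_le k)
    simp only [R.τ_zero] at this
    show R.τ i (k + 1) ω - R.τ i k ω ≤ t
    linarith [hall (k + 1)]
  rw [ae_iff]
  simp only [not_exists, not_lt]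
  exact le_antisymm (ge_of_tendsto' (ENNReal.tendsto_pow_atTop_nhds_zero_of_lt_one hr)
    fun m => (measure_mono_ae (hsub m)).trans (hincr m).le) bot_le

lemma ae_Y_le_yCN_sub {t : ℝ} (ht : 0 ≤ t) :
    ∀ᵐ ω ∂(ℙ : Measure Ω), ∀ i, R.τ i 1 ω ≤ t → R.Y i t ω ≤ R.yCN t ω - (N : ℝ)⁻¹ := by
  filter_upwards [R.τ_mono, ae_all_iff.2 fun i => R.ae_exists_lt_τ i ht] with ω hmono hesc i
  exact R.Y_le_yCN_sub_of_τ_le ht (fun i => (hmono i).monotone) (hesc i)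

variable [IsProbabilityMeasure (ℙ : Measure Ω)]

lemma measure_lt_τ_one (i : Fin N) {t : ℝ} (ht : 0 ≤ t) :
    (ℙ : Measure Ω) {ω | t < R.τ i 1 ω} = ENNReal.ofReal (rexp (-(R.w i : ℝ) * t)) := by
  have hle : (ℙ : Measure Ω) {ω | R.τ i 1 ω ≤ t}
      = ENNReal.ofReal (1 - rexp (-(R.w i : ℝ) * t)) := by
    simpa [R.τ_zero i] using R.incr_exp i 0 t ht
  have hexp : rexp (-(R.w i : ℝ) * t) ≤ 1 :=
    Real.exp_le_one_iff.2 (by nlinarith [(R.w i).2])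
  have hcompl : {ω | t < R.τ i 1 ω} = {ω | R.τ i 1 ω ≤ t}ᶜ := by ext; simp
  rw [hcompl, prob_compl_eq_one_sub (measurableSet_le (R.τ_meas i 1) measurable_const), hle,
    ← ENNReal.ofReal_one, ← ENNReal.ofReal_sub _ (sub_nonneg.2 hexp)]
  ring_nf

lemma memLp_ite_lt_τ (i : Fin N) (t c : ℝ) :
    MemLp (fun ω => if t < R.τ i 1 ω then c else 0) 2 (ℙ : Measure Ω) :=
  (memLp_top_of_bound (Measurable.ite (measurableSet_lt measurable_const (R.τ_meas i 1))
    measurable_const measurable_const).aestronglyMeasurable ‖c‖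
      (ae_of_all _ fun ω => by split_ifs <;> simp)).mono_exponent le_top

lemma integral_survivorFrac (p : ℝ → Prop) [DecidablePred p] {t : ℝ} (ht : 0 ≤ t) :
    (ℙ : Measure Ω)[R.survivorFrac p t]
      = (∑ i ∈ Finset.univ.filter fun i => p (R.y0 i), rexp (-(R.w i : ℝ) * t)) / N := by
  rw [survivorFrac_eq_sum]
  simp only [Finset.sum_apply]
  rw [integral_finsetSum _ fun i _ => (R.memLp_ite_lt_τ i t _).integrable one_le_two,
    Finset.sum_div]
  refine Finset.sum_congr rfl fun i _ => ?_
  have hind : (fun ω => if t < R.τ i 1 ω then (N : ℝ)⁻¹ else 0)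
      = {ω | t < R.τ i 1 ω}.indicator fun _ => (N : ℝ)⁻¹ := by
    ext ω
    simp [Set.indicator_apply]
  rw [hind, integral_indicator_const _ (measurableSet_lt measurable_const (R.τ_meas i 1)),
    measureReal_def, R.measure_lt_τ_one i ht, ENNReal.toReal_ofReal (Real.exp_pos _).le,
    smul_eq_mul, div_eq_mul_inv]

lemma variance_survivorFrac_le (p : ℝ → Prop) [DecidablePred p] (t : ℝ) :
    variance (R.survivorFrac p t) (ℙ : Measure Ω) ≤ (N : ℝ)⁻¹ := by
  set Z : Fin N → Ω → ℝ := fun i ω => if t < R.τ i 1 ω then (N : ℝ)⁻¹ else 0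
  have hindep : iIndepFun Z (ℙ : Measure Ω) := R.indep.comp
    (fun i (u : ℕ → ℝ) => if t < u 1 then (N : ℝ)⁻¹ else 0)
    fun i => Measurable.ite (measurableSet_lt measurable_const (measurable_pi_apply 1))
      measurable_const measurable_const
  have hZbdd : ∀ i ω, Z i ω ∈ Icc 0 (N : ℝ)⁻¹ := fun i ω => by
    by_cases h : t < R.τ i 1 ω <;> simp [Z, h]
  rw [survivorFrac_eq_sum, IndepFun.variance_sum (fun i _ => R.memLp_ite_lt_τ i t _)
    fun i _ j _ hij => hindep.indepFun hij]
  calc ∑ i ∈ _, variance (Z i) ℙ ≤ ∑ i ∈ Finset.univ.filter fun i => p (R.y0 i),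
        ((N : ℝ)⁻¹ / 2) ^ 2 := by
        gcongr with i
        simpa using variance_le_sq_of_bounded (ae_of_all _ (hZbdd i))
          (R.memLp_ite_lt_τ i t _).aestronglyMeasurable.aemeasurable
    _ ≤ N * ((N : ℝ)⁻¹ / 2) ^ 2 := by
        rw [Finset.sum_const, nsmul_eq_mul]
        gcongr
        exact_mod_cast (Finset.card_le_univ _).trans (Fintype.card_fin N).le
    _ ≤ (N : ℝ)⁻¹ := by
        rcases N.eq_zero_or_pos with rfl | hN
        · simp
        · field_simp
          norm_num

lemma measure_abs_survivorFrac_sub_ge_le (p : ℝ → Prop) [DecidablePred p] {t : ℝ} (ht : 0 ≤ t)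
    {δ : ℝ} (hδ : 0 < δ) :
    (ℙ : Measure Ω) {ω | δ ≤ |R.survivorFrac p t ω
        - (∑ i ∈ Finset.univ.filter fun i => p (R.y0 i), rexp (-(R.w i : ℝ) * t)) / N|}
      ≤ ENNReal.ofReal ((N : ℝ)⁻¹ / δ ^ 2) := by
  rw [← R.integral_survivorFrac p ht]
  have hmem : MemLp (R.survivorFrac p t) 2 (ℙ : Measure Ω) := by
    rw [survivorFrac_eq_sum]
    exact memLp_finsetSum' _ fun i _ => R.memLp_ite_lt_τ i t _
  exact (meas_ge_le_variance_div_sq hmem hδ).trans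
    (ENNReal.ofReal_le_ofReal (by gcongr; exact R.variance_survivorFrac_le p t))

end System

lemma tendstoInMeasure_survivorFrac [IsProbabilityMeasure (ℙ : Measure Ω)]
    (R : (N : ℕ) → RankingSystem Ω N) (p : ℝ → Prop) [DecidablePred p] {t : ℝ} (ht : 0 ≤ t) {m : ℝ}
    (hm : Tendsto (fun N : ℕ => (∑ i ∈ Finset.univ.filter fun i => p ((R N).y0 i),
      rexp (-((R N).w i : ℝ) * t)) / N) atTop (𝓝 m)) :
    TendstoInMeasure (ℙ : Measure Ω) (fun N => (R N).survivorFrac p t) atTop fun _ => m := by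
  refine tendstoInMeasure_iff_dist.2 fun δ hδ => ?_
  have hbound : Tendsto (fun N : ℕ => ENNReal.ofReal ((N : ℝ)⁻¹ / (δ / 2) ^ 2)) atTop (𝓝 0) := by
    rw [← ENNReal.ofReal_zero]
    refine ENNReal.tendsto_ofReal ?_
    have := (tendsto_inv_atTop_zero.comp tendsto_natCast_atTop_atTop).div_const ((δ / 2) ^ 2)
    rwa [zero_div] at this
  refine tendsto_of_tendsto_of_tendsto_of_le_of_le' tendsto_const_nhds hbound
    (Eventually.of_forall fun _ => zero_le) ?_
  filter_upwards [hm.eventually (eventually_abs_sub_lt m (half_pos hδ))] with N hN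
  refine (measure_mono fun ω (hω : δ ≤ dist _ m) => ?_).trans
    ((R N).measure_abs_survivorFrac_sub_ge_le p ht (half_pos hδ))
  rw [Real.dist_eq] at hω
  rw [Set.mem_ofPred_eq]
  linarith [abs_sub_le ((R N).survivorFrac p t ω)
    ((∑ i ∈ Finset.univ.filter fun i => p ((R N).y0 i), rexp (-((R N).w i : ℝ) * t)) / N) m]

section InitialProfile

variable (μ0 : ℝ → Measure ℝ≥0) (g : ℝ≥0 →ᵇ ℝ)

/-- The supremum in the assumption on the initial configuration. -/
def initDiscrepancy {N : ℕ} (R : RankingSystem Ω N) : ℝ :=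
  ⨆ y : Ico (0 : ℝ) 1, |(N : ℝ)⁻¹ * (∑ i : Fin N, g (R.w i)
      * (if R.y0 i ≤ (y : ℝ) then (1 : ℝ) else 0)) - ∫ z in (0 : ℝ)..(y : ℝ), ∫ x, g x ∂(μ0 z)|

variable {μ0 g}

lemma intervalIntegrable_integral (hμ0 : ∀ z, IsProbabilityMeasure (μ0 z))
    (hg : AEMeasurable (fun z => ∫ x, g x ∂(μ0 z)) volume) (a b : ℝ) :
    IntervalIntegrable (fun z => ∫ x, g x ∂(μ0 z)) volume a b :=
  intervalIntegrable_const.mono_fun' hg.aestronglyMeasurable.restrict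
    (ae_of_all _ fun z => g.norm_integral_le_norm (μ0 z))

lemma abs_avg_sub_integral_le (hμ0 : ∀ z, IsProbabilityMeasure (μ0 z)) {N : ℕ}
    (R : RankingSystem Ω N) {y : ℝ} (hy : y ∈ Ico (0 : ℝ) 1) :
    |(N : ℝ)⁻¹ * (∑ i : Fin N, g (R.w i) * (if R.y0 i ≤ y then (1 : ℝ) else 0))
      - ∫ z in (0 : ℝ)..y, ∫ x, g x ∂(μ0 z)| ≤ 2 * ‖g‖ := by
  have havg : |(N : ℝ)⁻¹ * (∑ i : Fin N, g (R.w i) * (if R.y0 i ≤ y then (1 : ℝ) else 0))|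
      ≤ ‖g‖ := by
    rw [abs_mul, abs_inv, Nat.abs_cast]
    refine inv_mul_le_of_le_mul₀ (Nat.cast_nonneg N) (norm_nonneg g) ?_
    refine (Finset.abs_sum_le_sum_abs _ _).trans ?_
    calc ∑ i, |g (R.w i) * (if R.y0 i ≤ y then (1 : ℝ) else 0)| ≤ ∑ _i : Fin N, ‖g‖ :=
          Finset.sum_le_sum fun i _ => by
            split_ifs <;> simp [← Real.norm_eq_abs, g.norm_coe_le_norm]
      _ = N * ‖g‖ := by simp
  have hint : |∫ z in (0 : ℝ)..y, ∫ x, g x ∂(μ0 z)| ≤ ‖g‖ := by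
    refine (intervalIntegral.norm_integral_le_of_norm_le_const
      fun z _ => g.norm_integral_le_norm (μ0 z)).trans ?_
    rw [sub_zero, abs_of_nonneg hy.1]
    exact mul_le_of_le_one_right (norm_nonneg g) hy.2.le
  linarith [abs_sub _ _ |>.trans (add_le_add havg hint)]

variable (R : (N : ℕ) → RankingSystem Ω N)

lemma tendsto_avg_sub_integral (hμ0 : ∀ z, IsProbabilityMeasure (μ0 z))
    (hinit : Tendsto (fun N => (R N).initDiscrepancy μ0 g) atTop (𝓝 0)) {z : ℕ → ℝ}
    (hz : ∀ᶠ N in atTop, z N ∈ Ico (0 : ℝ) 1) :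
    Tendsto (fun N : ℕ => (N : ℝ)⁻¹ * (∑ i, g ((R N).w i)
        * (if (R N).y0 i ≤ z N then (1 : ℝ) else 0)) - ∫ u in (0 : ℝ)..z N, ∫ x, g x ∂(μ0 u))
      atTop (𝓝 0) :=
  squeeze_zero_norm' (hz.mono fun N hN =>
    le_ciSup (f := fun y : Ico (0 : ℝ) 1 => |(N : ℝ)⁻¹ * (∑ i, g ((R N).w i)
        * (if (R N).y0 i ≤ (y : ℝ) then (1 : ℝ) else 0))
        - ∫ u in (0 : ℝ)..(y : ℝ), ∫ x, g x ∂(μ0 u)|)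
      ⟨2 * ‖g‖, Set.forall_mem_range.2 fun y => abs_avg_sub_integral_le hμ0 (R N) y.2⟩
      ⟨z N, hN⟩) hinit

lemma tendsto_avg_le (hμ0 : ∀ z, IsProbabilityMeasure (μ0 z))
    (hinit : Tendsto (fun N => (R N).initDiscrepancy μ0 g) atTop (𝓝 0)) {z : ℝ}
    (hz : z ∈ Ico (0 : ℝ) 1) :
    Tendsto (fun N : ℕ => (∑ i ∈ Finset.univ.filter fun i => (R N).y0 i ≤ z, g ((R N).w i)) / N)
      atTop (𝓝 (∫ u in (0 : ℝ)..z, ∫ x, g x ∂(μ0 u))) := by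
  have := (tendsto_avg_sub_integral R hμ0 hinit (Eventually.of_forall fun _ => hz)).add_const
    (∫ u in (0 : ℝ)..z, ∫ x, g x ∂(μ0 u))
  simpa [Finset.sum_filter, div_eq_inv_mul] using this

lemma tendsto_avg (hμ0 : ∀ z, IsProbabilityMeasure (μ0 z))
    (hg : AEMeasurable (fun z => ∫ x, g x ∂(μ0 z)) volume)
    (hinit : Tendsto (fun N => (R N).initDiscrepancy μ0 g) atTop (𝓝 0)) :
    Tendsto (fun N : ℕ => (∑ i, g ((R N).w i)) / N)
      atTop (𝓝 (∫ u in (0 : ℝ)..1, ∫ x, g x ∂(μ0 u))) := by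
  have hinv := tendsto_inv_atTop_zero.comp (tendsto_natCast_atTop_atTop (R := ℝ))
  have hz : ∀ᶠ N : ℕ in atTop, 1 - (N : ℝ)⁻¹ ∈ Ico (0 : ℝ) 1 := by
    filter_upwards [eventually_ge_atTop 1] with N hN
    have : (0 : ℝ) < (N : ℝ)⁻¹ := inv_pos.2 (Nat.cast_pos.2 hN)
    exact ⟨sub_nonneg.2 (inv_le_one_of_one_le₀ (Nat.one_le_cast.2 hN)), by linarith⟩
  have hprim : Tendsto (fun N : ℕ => ∫ u in (0 : ℝ)..(1 - (N : ℝ)⁻¹), ∫ x, g x ∂(μ0 u)) atTop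
      (𝓝 (∫ u in (0 : ℝ)..1, ∫ x, g x ∂(μ0 u))) := by
    refine ((intervalIntegral.continuous_primitive
      (intervalIntegrable_integral hμ0 hg) 0).tendsto 1).comp ?_
    simpa using hinv.const_sub (1 : ℝ)
  have hsum := (tendsto_avg_sub_integral R hμ0 hinit hz).add hprim
  rw [zero_add] at hsum
  refine hsum.congr fun N => ?_
  simp [(R N).y0_le_one_sub_inv, div_eq_inv_mul]

lemma tendsto_avg_gt (hμ0 : ∀ z, IsProbabilityMeasure (μ0 z))
    (hg : AEMeasurable (fun z => ∫ x, g x ∂(μ0 z)) volume)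
    (hinit : Tendsto (fun N => (R N).initDiscrepancy μ0 g) atTop (𝓝 0)) {z : ℝ}
    (hz : z ∈ Ico (0 : ℝ) 1) :
    Tendsto (fun N : ℕ => (∑ i ∈ Finset.univ.filter fun i => z < (R N).y0 i, g ((R N).w i)) / N)
      atTop (𝓝 (∫ u in z..1, ∫ x, g x ∂(μ0 u))) := by
  rw [← intervalIntegral.integral_interval_sub_left (intervalIntegrable_integral hμ0 hg 0 1)
    (intervalIntegrable_integral hμ0 hg 0 z)]
  refine ((tendsto_avg R hμ0 hg hinit).sub (tendsto_avg_le R hμ0 hinit hz)).congr fun N => ?_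
  rw [div_sub_div_same, ← Finset.sum_filter_add_sum_filter_not Finset.univ fun i => (R N).y0 i ≤ z]
  simp [not_le]

end InitialProfile

section Limit

variable (R : (N : ℕ) → RankingSystem Ω N) {t : ℝ} {I : ℝ → ℝ}

lemma tendsto_measure_yhatN_lt (ht : 0 ≤ t) {y yh ε : ℝ} (hy1 : y < 1) (hyh : yh ∈ Ico (0 : ℝ) 1)
    (hε : 0 < ε) (hIint : ∀ a b, IntervalIntegrable I volume a b)
    (hIpos : ∀ a b, a < b → 0 < ∫ u in a..b, I u) (htail : ∫ u in yh..1, I u = 1 - y)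
    (hgt : ∀ z ∈ Ico (0 : ℝ) 1, TendstoInMeasure (ℙ : Measure Ω)
      (fun N => (R N).survivorFrac (z < ·) t) atTop fun _ => ∫ u in z..1, I u) :
    Tendsto (fun N => (ℙ : Measure Ω) {ω | (R N).yCN t ω < y ∧ (R N).yhatN y t ω < yh - ε})
      atTop (𝓝 0) := by
  by_cases hεyh : ε ≤ yh
  · have hm : 1 - y < ∫ u in (yh - ε)..1, I u := by
      rw [← intervalIntegral.integral_add_adjacent_intervals (hIint _ yh) (hIint yh 1), htail]
      linarith [hIpos (yh - ε) yh (by linarith)]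
    refine tendsto_measure_zero_of_eventually_ae_le ?_
      (TendstoInMeasure.tendsto_measure_le_of_lt (hgt (yh - ε) ⟨by linarith, by linarith [hyh.2]⟩)
        hm)
    filter_upwards [eventually_inv_lt (sub_pos.2 hy1), eventually_gt_atTop 0] with N hN hN0
    filter_upwards [(R N).ae_Y_le_yCN_sub ht] with ω hjumped ⟨hyCN, hlt⟩
    exact (not_le.1 fun hbeyond =>
      ((R N).le_yhatN ht hN0 hN hjumped hyCN hbeyond).not_gt hlt).le
  · have hempty : ∀ N, {ω | (R N).yCN t ω < y ∧ (R N).yhatN y t ω < yh - ε} = ∅ := fun N =>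
      eq_empty_of_forall_notMem fun ω ⟨_, hlt⟩ => by linarith [(R N).yhatN_nonneg y t ω]
    simp [hempty]

lemma tendsto_measure_lt_yhatN (ht : 0 ≤ t) {y yh ε : ℝ} (hyh : yh ∈ Ico (0 : ℝ) 1)
    (hε : 0 < ε) (hIint : ∀ a b, IntervalIntegrable I volume a b)
    (hIpos : ∀ a b, a < b → 0 < ∫ u in a..b, I u) (htail : ∫ u in yh..1, I u = 1 - y)
    (hle : ∀ z ∈ Ico (0 : ℝ) 1, TendstoInMeasure (ℙ : Measure Ω)
      (fun N => (R N).survivorFrac (· ≤ z) t) atTop fun _ => ∫ u in (0 : ℝ)..z, I u)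
    (hgt : ∀ z ∈ Ico (0 : ℝ) 1, TendstoInMeasure (ℙ : Measure Ω)
      (fun N => (R N).survivorFrac (z < ·) t) atTop fun _ => ∫ u in z..1, I u) :
    Tendsto (fun N => (ℙ : Measure Ω) {ω | (R N).yCN t ω < y ∧ yh + ε < (R N).yhatN y t ω})
      atTop (𝓝 0) := by
  by_cases hεyh : yh + ε < 1
  · have hz : yh + ε ∈ Ico (0 : ℝ) 1 := ⟨by linarith [hyh.1], hεyh⟩
    have hm : ∫ u in (yh + ε)..1, I u < 1 - y := by
      rw [← htail, ← intervalIntegral.integral_add_adjacent_intervals (hIint yh (yh + ε))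
        (hIint _ 1)]
      linarith [hIpos yh (yh + ε) (by linarith)]
    obtain ⟨a, hma, hay⟩ := exists_between hm
    refine tendsto_measure_zero_of_eventually_ae_le ?_ (tendsto_measure_union_zero
      (TendstoInMeasure.tendsto_measure_le_of_lt (hle _ hz) (hIpos 0 _ (by linarith [hyh.1])))
      (TendstoInMeasure.tendsto_measure_ge_of_gt (hgt _ hz) hma))
    filter_upwards [eventually_inv_lt (sub_pos.2 hay)] with N hN
    refine ae_of_all _ fun ω ⟨_, hlt⟩ => ?_
    rcases le_or_gt ((R N).survivorFrac (· ≤ yh + ε) t ω) 0 with hnone | hsurv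
    · exact Or.inl hnone
    · refine Or.inr (show a ≤ _ from not_lt.1 fun hbeyond => ?_)
      exact ((R N).yhatN_le ht hsurv (by linarith)).not_gt hlt
  · have hempty : ∀ N, {ω | (R N).yCN t ω < y ∧ yh + ε < (R N).yhatN y t ω} = ∅ := fun N =>
      eq_empty_of_forall_notMem fun ω ⟨_, hlt⟩ => by linarith [(R N).yhatN_lt_one y t ω]
    simp [hempty]

lemma tendsto_measure_abs_yhatN_sub_gt (ht : 0 ≤ t) {y yh ε : ℝ}
    (hy1 : y < 1) (hyh : yh ∈ Ico (0 : ℝ) 1) (hε : 0 < ε)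
    (hIint : ∀ a b, IntervalIntegrable I volume a b)
    (hIpos : ∀ a b, a < b → 0 < ∫ u in a..b, I u) (htail : ∫ u in yh..1, I u = 1 - y)
    (hle : ∀ z ∈ Ico (0 : ℝ) 1, TendstoInMeasure (ℙ : Measure Ω)
      (fun N => (R N).survivorFrac (· ≤ z) t) atTop fun _ => ∫ u in (0 : ℝ)..z, I u)
    (hgt : ∀ z ∈ Ico (0 : ℝ) 1, TendstoInMeasure (ℙ : Measure Ω)
      (fun N => (R N).survivorFrac (z < ·) t) atTop fun _ => ∫ u in z..1, I u) :
    Tendsto (fun N => (ℙ : Measure Ω)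
      {ω | (R N).yCN t ω < y ∧ ε < |(R N).yhatN y t ω - yh|}) atTop (𝓝 0) := by
  refine tendsto_measure_zero_of_eventually_ae_le (Eventually.of_forall fun _ => ae_of_all _ ?_)
    (tendsto_measure_union_zero
      (tendsto_measure_yhatN_lt R ht hy1 hyh hε hIint hIpos htail hgt)
      (tendsto_measure_lt_yhatN R ht hyh hε hIint hIpos htail hle hgt))
  rintro ω ⟨hyCN, hdev⟩
  rcases lt_abs.1 hdev with hdev | hdev
  · exact Or.inr ⟨hyCN, by linarith⟩
  · exact Or.inl ⟨hyCN, by linarith⟩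

end Limit

end RankingSystem

def expNegMul (t : ℝ) (ht : 0 ≤ t) : ℝ≥0 →ᵇ ℝ :=
  BoundedContinuousFunction.ofNormedAddCommGroup (fun x : ℝ≥0 => rexp (-(x : ℝ) * t))
    (by fun_prop) 1 fun x => by
      rw [Real.norm_eq_abs, abs_of_pos (Real.exp_pos _), Real.exp_le_one_iff]
      nlinarith [x.2]

theorem stmt19_general
    (Ω : Type) [MeasureSpace Ω] [IsProbabilityMeasure (ℙ : Measure Ω)]
    (R : (N : ℕ) → RankingSystem Ω N)
    (μ0 : ℝ → Measure ℝ≥0) (hμ0 : ∀ z, IsProbabilityMeasure (μ0 z))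
    (hμ0meas : ∀ g : ℝ≥0 →ᵇ ℝ, AEMeasurable (fun z => ∫ x, g x ∂(μ0 z)) volume)
    (hinit : ∀ g : ℝ≥0 →ᵇ ℝ,
      Tendsto (fun N : ℕ => ⨆ y : Ico (0 : ℝ) 1,
        |(N : ℝ)⁻¹ * (∑ i : Fin N, g ((R N).w i)
            * (if (R N).y0 i ≤ (y : ℝ) then (1 : ℝ) else 0))
          - ∫ z in (0 : ℝ)..(y : ℝ), ∫ x, g x ∂(μ0 z)|) atTop (𝓝 0))
    (yC : ℝ → ℝ)
    (yCy : ℝ → ℝ → ℝ)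
    (hyCy : ∀ y t : ℝ, yCy y t = 1 - ∫ z in y..1, ∫ x, rexp (-(x : ℝ) * t) ∂(μ0 z))
    (yhat : ℝ → ℝ → ℝ)
    (hyhat : ∀ t : ℝ, 0 < t → ∀ y ∈ Ico (yC t) 1,
      yhat y t ∈ Ico (0 : ℝ) 1 ∧ yCy (yhat y t) t = y)
    (t : ℝ) (ht : 0 < t) (y : ℝ) (hy0 : yC t < y) (hy1 : y < 1) :
    ∀ ε > (0 : ℝ), Tendsto
      (fun N : ℕ => (ℙ : Measure Ω)
        {ω | (R N).yCN t ω < y ∧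
          ε < |sInf {x : ℝ | ∃ i : Fin N, (R N).y0 i = x ∧ y < (R N).Y i t ω}
                - yhat y t|})
      atTop (𝓝 0) := by
  intro ε hε
  obtain ⟨hyh, hyCy_yh⟩ := hyhat t ht y ⟨hy0.le, hy1⟩
  set g := expNegMul t ht.le
  have hIint := RankingSystem.intervalIntegrable_integral hμ0 (hμ0meas g)
  have hIpos (a b : ℝ) (hab : a < b) : 0 < ∫ u in a..b, ∫ x, g x ∂(μ0 u) :=
    intervalIntegral.intervalIntegral_pos_of_pos_on (hIint a b)
      (fun z _ => integral_exp_pos (f := fun x : ℝ≥0 => -(x : ℝ) * t) (g.integrable (μ0 z)))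
      hab
  exact RankingSystem.tendsto_measure_abs_yhatN_sub_gt R ht.le hy1 hyh hε hIint hIpos
    (show ∫ u in (yhat y t)..1, ∫ x, rexp (-(x : ℝ) * t) ∂(μ0 u) = 1 - y by
      rw [hyCy] at hyCy_yh; linarith)
    (fun z hz => RankingSystem.tendstoInMeasure_survivorFrac R _ ht.le
      (RankingSystem.tendsto_avg_le R hμ0 (hinit g) hz))
    (fun z hz => RankingSystem.tendstoInMeasure_survivorFrac R _ ht.le
      (RankingSystem.tendsto_avg_gt R hμ0 (hμ0meas g) (hinit g) hz))

/-- for `y_C(t) < y < 1`, the random initial position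
`ŷ^{(N)}(y,t) = inf{y_{i,0} : Y_i(t) > y}` converges in probability (restricted to the
event `y > y_C^{(N)}(t)`) to the deterministic value `ŷ(y,t)`. -/
theorem stmt19
    (Ω : Type) [MeasureSpace Ω] [IsProbabilityMeasure (ℙ : Measure Ω)]
    (R : (N : ℕ) → RankingSystem Ω N)
    (μ0 : ℝ → Measure ℝ≥0) (hμ0 : ∀ z, IsProbabilityMeasure (μ0 z))
    (hμ0meas : ∀ g : ℝ≥0 →ᵇ ℝ, AEMeasurable (fun z => ∫ x, g x ∂(μ0 z)) volume)
    (hinit : ∀ g : ℝ≥0 →ᵇ ℝ,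
      Tendsto (fun N : ℕ => ⨆ y : Ico (0 : ℝ) 1,
        |(N : ℝ)⁻¹ * (∑ i : Fin N, g ((R N).w i)
            * (if (R N).y0 i ≤ (y : ℝ) then (1 : ℝ) else 0))
          - ∫ z in (0 : ℝ)..(y : ℝ), ∫ x, g x ∂(μ0 z)|) atTop (𝓝 0))
    (lam : Measure ℝ≥0) [IsProbabilityMeasure lam]
    (hlam : ∀ s : Set ℝ≥0, MeasurableSet s →
      lam s = ∫⁻ y in Ico (0 : ℝ) 1, (μ0 y) s)
    (h0 : lam {0} = 0)
    (hmean : Integrable (fun x : ℝ≥0 => (x : ℝ)) lam)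
    (yC : ℝ → ℝ) (hyC : ∀ t : ℝ, yC t = 1 - ∫ x, rexp (-(x : ℝ) * t) ∂lam)
    (yCy : ℝ → ℝ → ℝ)
    (hyCy : ∀ y t : ℝ, yCy y t = 1 - ∫ z in y..1, ∫ x, rexp (-(x : ℝ) * t) ∂(μ0 z))
    (yhat : ℝ → ℝ → ℝ)
    (hyhat : ∀ t : ℝ, 0 < t → ∀ y ∈ Ico (yC t) 1,
      yhat y t ∈ Ico (0 : ℝ) 1 ∧ yCy (yhat y t) t = y)
    (t : ℝ) (ht : 0 < t) (y : ℝ) (hy0 : yC t < y) (hy1 : y < 1) :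
    ∀ ε > (0 : ℝ), Tendsto
      (fun N : ℕ => (ℙ : Measure Ω)
        {ω | (R N).yCN t ω < y ∧
          ε < |sInf {x : ℝ | ∃ i : Fin N, (R N).y0 i = x ∧ y < (R N).Y i t ω}
                - yhat y t|})
      atTop (𝓝 0) :=
  stmt19_general Ω R μ0 hμ0 hμ0meas hinit yC yCy hyCy yhat hyhat t ht y hy0 hy1
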